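/- Let a ∈ p^l D_k^{(p^{m−l})} with 0 ≤ l ≤ m−1 and let j satisfy l+1 < j ≤ m. Then H̄_b^{(p^j)}(β^a) = H̄_{b+k}^{(p^{j−l})}(β) in GF(2^n). -/

import Mathlib

open Finset Function
open scoped Nat

/-!
Put `s = j - l`, `δ = p^(s-1) f / 2` and `γ = β^(p^(m-s))`, a primitive `p^s`-th root of unity.
Both sides are sums of `G c = γ^(g^c)`, which has period `φ(p^s) = 2δe`, and whose sum over a
period is the sum of `γ^x` over the units `x` mod `p^s`; this vanishes since `s ≥ 2`.
Multiplying by `a` shifts the class index by `k`, multiplies the index inside each class by `p^l`,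
which is coprime to `e` and so only permutes the class, and lengthens the range of class indices
by the odd factor `p^l`. The class sums are `2δ`-periodic with vanishing sum over a period, so
the extra `δ (p^l - 1)` classes contribute nothing.
-/

section Sums

variable {M : Type*} [AddCommMonoid M]

theorem sum_range_mul_eq_sum_sum (F : ℕ → M) (a b : ℕ) :
    ∑ x ∈ range (a * b), F x = ∑ q ∈ range b, ∑ i ∈ range a, F (i + a * q) := by
  induction b with
  | zero => simp
  | succ b ih =>
    rw [Nat.mul_succ, sum_range_add, ih, sum_range_succ]
    simp only [add_comm]

namespace Function.Periodic

variable {F : ℕ → M} {n : ℕ}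

theorem sum_range_mul_add (hF : Periodic F n) {u : ℕ} (hu : u.Coprime n) (v : ℕ) :
    ∑ t ∈ range n, F (u * t + v) = ∑ t ∈ range n, F t := by
  rcases n.eq_zero_or_pos with rfl | hn
  · simp
  have hmaps : Set.MapsTo (fun t ↦ (u * t + v) % n) (range n) (range n) :=
    fun t _ ↦ mem_range.2 (Nat.mod_lt _ hn)
  have hinj : Set.InjOn (fun t ↦ (u * t + v) % n) (range n) := fun t₁ h₁ t₂ h₂ h ↦
    ((Nat.ModEq.add_right_cancel' v h).cancel_left_of_coprime hu.symm).eq_of_lt_of_lt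
      (mem_range.1 h₁) (mem_range.1 h₂)
  exact sum_nbij _ hmaps hinj (surjOn_of_injOn_of_card_le _ hmaps hinj le_rfl)
    fun t _ ↦ (hF.map_mod_nat _).symm

theorem sum_range_add (hF : Periodic F n) (c : ℕ) :
    ∑ i ∈ range n, F (c + i) = ∑ i ∈ range n, F i := by
  simpa [add_comm c] using hF.sum_range_mul_add (Nat.coprime_one_left n) c

theorem sum_range_mul_eq_zero (hF : Periodic F n) (h₀ : ∑ i ∈ range n, F i = 0) (c q : ℕ) :
    ∑ i ∈ range (n * q), F (c + i) = 0 := by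
  rw [sum_range_mul_eq_sum_sum]
  refine sum_eq_zero fun w _ ↦ ?_
  have hw : Periodic F (n * w) := by simpa [mul_comm] using hF.nat_mul w
  simp_rw [← add_assoc, hw _]
  rw [hF.sum_range_add, h₀]

theorem sum_range_mul_odd {δ L : ℕ} (hF : Periodic F (2 * δ)) (h₀ : ∑ i ∈ range (2 * δ), F i = 0)
    (hL : Odd L) (c : ℕ) :
    ∑ i ∈ range (δ * L), F (c + i) = ∑ i ∈ range δ, F (c + i) := by
  obtain ⟨q, rfl⟩ := hL
  rw [show δ * (2 * q + 1) = δ + 2 * δ * q by ring, Finset.sum_range_add]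
  simp_rw [← add_assoc]
  rw [hF.sum_range_mul_eq_zero h₀, add_zero]

theorem sum_range_mul_odd_sum_range_mul_add {G : ℕ → M} {δ e : ℕ}
    (hG : Periodic G (2 * δ * e)) (h₀ : ∑ x ∈ range (2 * δ * e), G x = 0) {u L : ℕ}
    (hu : u.Coprime e) (hL : Odd L) (c v : ℕ) :
    ∑ i ∈ range (δ * L), ∑ t ∈ range e, G (c + i + 2 * δ * (u * t + v))
      = ∑ i ∈ range δ, ∑ t ∈ range e, G (c + i + 2 * δ * t) := by
  have hcoset (c : ℕ) : Periodic (fun t ↦ G (c + 2 * δ * t)) e := fun t ↦ by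
    simpa only [mul_add, ← add_assoc, mul_assoc] using hG (c + 2 * δ * t)
  set S : ℕ → M := fun c ↦ ∑ t ∈ range e, G (c + 2 * δ * t)
  have hS : Periodic S (2 * δ) := fun c ↦ by
    simpa only [S, mul_add, mul_one, add_assoc] using (hcoset c).sum_range_add 1
  have hS₀ : ∑ i ∈ range (2 * δ), S i = 0 := by
    rw [← h₀, sum_range_mul_eq_sum_sum G (2 * δ) e]
    exact sum_comm
  calc ∑ i ∈ range (δ * L), ∑ t ∈ range e, G (c + i + 2 * δ * (u * t + v))
      = ∑ i ∈ range (δ * L), S (c + i) :=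
        sum_congr rfl fun i _ ↦ (hcoset (c + i)).sum_range_mul_add hu v
    _ = ∑ i ∈ range δ, S (c + i) := hS.sum_range_mul_odd hS₀ hL c

end Function.Periodic

theorem sum_range_totient_pow_eq_sum_coprime {n g : ℕ}
    (hg : orderOf (g : ZMod n) = φ n) {F : ℕ → M} (hF : Periodic F n) :
    ∑ c ∈ range (φ n), F (g ^ c) = ∑ x ∈ range n with n.Coprime x, F x := by
  rcases n.eq_zero_or_pos with rfl | hn
  · simp
  have hφ : φ n ≠ 0 := (Nat.totient_pos.2 hn).ne'
  have hgn : g.Coprime n := (ZMod.isUnit_iff_coprime g n).1 <|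
    IsUnit.of_pow_eq_one (hg ▸ pow_orderOf_eq_one _) hφ
  have hmaps : Set.MapsTo (fun c ↦ g ^ c % n) (range (φ n)) ((range n).filter n.Coprime) :=
    fun c _ ↦ mem_filter.2
      ⟨mem_range.2 (Nat.mod_lt _ hn), ((ZMod.coprime_mod_iff_coprime _ _).2 (hgn.pow_left c)).symm⟩
  have hinj : Set.InjOn (fun c ↦ g ^ c % n) (range (φ n)) := fun c₁ h₁ c₂ h₂ h ↦ by
    have hcast := (ZMod.natCast_eq_natCast_iff' (g ^ c₁) (g ^ c₂) n).2 h
    push_cast at hcast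
    exact pow_injOn_Iio_orderOf (by simpa [hg] using h₁) (by simpa [hg] using h₂) hcast
  exact sum_nbij _ hmaps hinj (surjOn_of_injOn_of_card_le _ hmaps hinj (card_range _).ge)
    fun c _ ↦ (hF.map_mod_nat _).symm

end Sums

theorem periodic_pow_pow {R : Type*} [Monoid R] {ζ : R} {n : ℕ} (hζ : ζ ^ n = 1) (g : ℕ) :
    Periodic (fun c ↦ ζ ^ g ^ c) (orderOf (g : ZMod n)) := fun c ↦ by
  refine pow_eq_pow_of_modEq ?_ hζ
  rw [← ZMod.natCast_eq_natCast_iff]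
  push_cast
  rw [pow_add, pow_orderOf_eq_one, mul_one]

namespace IsPrimitiveRoot

theorem pow_pow_sub {R : Type*} [CommMonoid R] {ζ : R} {p m : ℕ} (hζ : IsPrimitiveRoot ζ (p ^ m))
    (hp : 0 < p) {s : ℕ} (hs : s ≤ m) : IsPrimitiveRoot (ζ ^ p ^ (m - s)) (p ^ s) := by
  have := hζ.pow_of_dvd (pow_pos hp (m - s)).ne' (pow_dvd_pow p (m.sub_le s))
  rwa [Nat.pow_div (m.sub_le s) hp, Nat.sub_sub_self hs] at this

variable {R : Type*} [CommRing R] [IsDomain R] {ζ : R} {p s : ℕ}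

theorem sum_pow_coprime_eq_zero (hp : p.Prime) (hs : 2 ≤ s) (hζ : IsPrimitiveRoot ζ (p ^ s)) :
    ∑ x ∈ range (p ^ s) with (p ^ s).Coprime x, ζ ^ x = 0 := by
  obtain ⟨s, rfl⟩ : ∃ t, s = t + 1 := ⟨s - 1, by omega⟩
  have hcop (x : ℕ) : (p ^ (s + 1)).Coprime x ↔ ¬ p ∣ x :=
    (Nat.coprime_pow_left_iff s.succ_pos _ _).trans hp.coprime_iff_not_dvd
  have hζp : IsPrimitiveRoot (ζ ^ p) (p ^ s) := by
    simpa [pow_succ', hp.pos] using hζ.pow_of_dvd hp.ne_zero (dvd_pow_self p s.succ_ne_zero)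
  rw [sum_filter]
  simp_rw [hcop]
  rw [pow_succ', sum_range_mul_eq_sum_sum]
  calc ∑ q ∈ range (p ^ s), ∑ i ∈ range p, (if ¬p ∣ i + p * q then ζ ^ (i + p * q) else 0)
      = (∑ i ∈ range p, if ¬p ∣ i then ζ ^ i else 0) * ∑ q ∈ range (p ^ s), (ζ ^ p) ^ q := by
        rw [sum_mul_sum, sum_comm]
        refine sum_congr rfl fun i _ ↦ sum_congr rfl fun q _ ↦ ?_
        simp only [Nat.dvd_add_left (dvd_mul_right p q), pow_add, pow_mul, ite_mul, zero_mul]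
    _ = 0 := by
        rw [hζp.geom_sum_eq_zero (Nat.one_lt_pow (by omega) hp.one_lt), mul_zero]

theorem sum_pow_pow_eq_zero {g : ℕ} (hp : p.Prime) (hs : 2 ≤ s) (hζ : IsPrimitiveRoot ζ (p ^ s))
    (hg : orderOf (g : ZMod (p ^ s)) = φ (p ^ s)) :
    ∑ c ∈ range (φ (p ^ s)), ζ ^ g ^ c = 0 := by
  rw [sum_range_totient_pow_eq_sum_coprime hg fun x ↦ by rw [pow_add, hζ.pow_eq_one, mul_one]]
  exact hζ.sum_pow_coprime_eq_zero hp hs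

end IsPrimitiveRoot

theorem Hbar_eval_high_level_general (p m e f r g b l k t₀ : ℕ) (hp : p.Prime) (hop : Odd p)
    (hr : 1 ≤ r) (hf : f = 2 ^ r) (hef : p - 1 = e * f)
    (hroot : ∀ j, 1 ≤ j → j ≤ m → orderOf (g : ZMod (p ^ j)) = Nat.totient (p ^ j))
    {F : Type*} [Field F] (β : F) (hβ : orderOf β = p ^ m) :
    -- `a` is a representative of an element of `p^l D_k^{(p^{m-l})}`
    let a : ℕ := p ^ l * g ^ (k + p ^ (m - l - 1) * f * t₀)
    ∀ j, l + 1 < j → j ≤ m →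
      ∑ i ∈ Finset.range (p ^ (j - 1) * f / 2), ∑ t ∈ Finset.range e,
          β ^ (a * (p ^ (m - j) * g ^ (b + i + p ^ (j - 1) * f * t)))
        = ∑ i ∈ Finset.range (p ^ (j - l - 1) * f / 2), ∑ t ∈ Finset.range e,
            β ^ (p ^ (m - (j - l)) * g ^ (b + k + i + p ^ (j - l - 1) * f * t)) := by
  intro a j hlj hjm
  obtain ⟨h, rfl⟩ : ∃ h, f = 2 * h :=
    ⟨2 ^ (r - 1), by rw [hf, ← pow_succ', Nat.sub_add_cancel hr]⟩
  set s := j - l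
  set δ := p ^ (s - 1) * h
  have hj : p ^ (j - 1) = p ^ (s - 1) * p ^ l := by rw [← pow_add]; congr 1; omega
  have hml : p ^ (m - l - 1) = p ^ (s - 1) * p ^ (m - j) := by rw [← pow_add]; congr 1; omega
  have hms : p ^ (m - s) = p ^ l * p ^ (m - j) := by rw [← pow_add]; congr 1; omega
  have hφ : φ (p ^ s) = 2 * δ * e := by
    rw [Nat.totient_prime_pow hp (by omega), hef]; ring
  have hζ := (hβ ▸ IsPrimitiveRoot.orderOf β).pow_pow_sub hp.pos (s := s) (by omega)
  have hg := hroot s (by omega) (by omega)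
  have hpe : (p ^ l).Coprime e := .pow_left l <| .coprime_dvd_right ⟨2 * h, hef⟩ <|
    (Nat.coprime_self_sub_right hp.one_le).2 (Nat.coprime_one_right p)
  have hhalf (n : ℕ) : p ^ n * (2 * h) / 2 = p ^ n * h := by
    rw [mul_left_comm, Nat.mul_div_cancel_left _ two_pos]
  calc _ = ∑ i ∈ range (δ * p ^ l), ∑ t ∈ range e,
        (β ^ p ^ (m - s)) ^ g ^ (b + k + i + 2 * δ * (p ^ l * t + p ^ (m - j) * t₀)) := by
        rw [show p ^ (j - 1) * (2 * h) / 2 = δ * p ^ l by rw [hhalf, hj]; ring]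
        refine sum_congr rfl fun i _ ↦ sum_congr rfl fun t _ ↦ ?_
        rw [← pow_mul, hms, hj]
        simp only [a, hml, δ]
        ring
    _ = ∑ i ∈ range δ, ∑ t ∈ range e, (β ^ p ^ (m - s)) ^ g ^ (b + k + i + 2 * δ * t) := by
        refine Periodic.sum_range_mul_odd_sum_range_mul_add
          (G := fun c ↦ (β ^ p ^ (m - s)) ^ g ^ c) ?_ ?_ hpe hop.pow _ _
        · simpa only [hg, hφ] using periodic_pow_pow hζ.pow_eq_one g
        · simpa only [hφ] using hζ.sum_pow_pow_eq_zero hp (by omega) hg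
    _ = _ := by
        rw [hhalf]
        refine sum_congr rfl fun i _ ↦ sum_congr rfl fun t _ ↦ ?_
        rw [← pow_mul]
        ring

/-- Lemma 2(3): for `a ∈ p^l D_k^{(p^{m-l})}` with `0 ≤ l ≤ m-1` and
`l + 1 < j ≤ m`, one has `H̄_b^{(p^j)}(β^a) = H̄_{b+k}^{(p^{j-l})}(β)`. -/
theorem Hbar_eval_high_level (p m e f r g b l k t₀ : ℕ) (hp : p.Prime) (hop : Odd p)
    (hm : 1 ≤ m) (hr : 1 ≤ r) (hf : f = 2 ^ r) (he : 0 < e) (hef : p - 1 = e * f)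
    (hroot : ∀ j, 1 ≤ j → j ≤ m → orderOf (g : ZMod (p ^ j)) = Nat.totient (p ^ j))
    (hl : l ≤ m - 1) (ht₀ : t₀ < e)
    {F : Type*} [Field F] (hchar : CharP F 2) (β : F) (hβ : orderOf β = p ^ m) :
    -- `a` is a representative of an element of `p^l D_k^{(p^{m-l})}`
    let a : ℕ := p ^ l * g ^ (k + p ^ (m - l - 1) * f * t₀)
    ∀ j, l + 1 < j → j ≤ m →
      ∑ i ∈ Finset.range (p ^ (j - 1) * f / 2), ∑ t ∈ Finset.range e,
          β ^ (a * (p ^ (m - j) * g ^ (b + i + p ^ (j - 1) * f * t)))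
        = ∑ i ∈ Finset.range (p ^ (j - l - 1) * f / 2), ∑ t ∈ Finset.range e,
            β ^ (p ^ (m - (j - l)) * g ^ (b + k + i + p ^ (j - l - 1) * f * t)) :=
  Hbar_eval_high_level_general p m e f r g b l k t₀ hp hop hr hf hef hroot β hβ
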